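/- Let $X$ be a Banach space, $f : [a,b] \to X$ differentiable with derivative $f'$ satisfying $\|f'(t)\| \le M$ for all $t \in [a,b]$. Then for every $s \in [a,b]$: $\left\| f(s) - \frac{1}{b-a}\int_a^b f(t)\,dt \right\| \le \left[\frac{1}{4} + \left(\frac{s - \frac{a+b}{2}}{b-a}\right)^2\right](b-a)\,M$. -/
import Mathlib


open MeasureTheory intervalIntegral

theorem stmt5 {X : Type*} [NormedAddCommGroup X] [NormedSpace ℝ X] [CompleteSpace X]
    {a b : ℝ} (hab : a < b) {f f' : ℝ → X}
    (hderiv : ∀ t ∈ Set.Icc a b, HasDerivAt f (f' t) t)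
    {M : ℝ} (hM : ∀ t ∈ Set.Icc a b, ‖f' t‖ ≤ M) {s : ℝ} (hs : s ∈ Set.Icc a b) :
    ‖f s - (b - a)⁻¹ • (∫ t in a..b, f t)‖ ≤
      (1 / 4 + ((s - (a + b) / 2) / (b - a)) ^ 2) * (b - a) * M := by
  have hba : (0:ℝ) < b - a := sub_pos.mpr hab
  have hne : b - a ≠ 0 := ne_of_gt hba
  have hM0 : 0 ≤ M := le_trans (norm_nonneg _) (hM a ⟨le_rfl, hab.le⟩)
  have hcont : ContinuousOn f (Set.Icc a b) := fun t ht =>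
    (hderiv t ht).continuousAt.continuousWithinAt
  have hint : IntervalIntegrable f volume a b := by
    apply ContinuousOn.intervalIntegrable
    rwa [Set.uIcc_of_le hab.le]
  have key : ∀ t ∈ Set.Icc a b, ‖f s - f t‖ ≤ M * |s - t| := by
    intro t ht
    have := (convex_Icc a b).norm_image_sub_le_of_norm_hasDerivWithin_le
      (fun x hx => (hderiv x hx).hasDerivWithinAt) hM ht hs
    simpa [Real.norm_eq_abs] using this
  have hrw : f s - (b - a)⁻¹ • (∫ t in a..b, f t)
      = (b - a)⁻¹ • ∫ t in a..b, (f s - f t) := by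
    rw [intervalIntegral.integral_sub intervalIntegrable_const hint,
      intervalIntegral.integral_const, smul_sub, smul_smul,
      inv_mul_cancel₀ hne, one_smul]
  have hcont2 : ContinuousOn (fun t => ‖f s - f t‖) (Set.Icc a b) :=
    (continuousOn_const.sub hcont).norm
  have hint2 : IntervalIntegrable (fun t => ‖f s - f t‖) volume a b := by
    apply ContinuousOn.intervalIntegrable
    rwa [Set.uIcc_of_le hab.le]
  have hint3 : IntervalIntegrable (fun t => M * |s - t|) volume a b :=
    (continuous_const.mul (continuous_const.sub continuous_id).abs).intervalIntegrable a b
  have hb1 : ‖∫ t in a..b, (f s - f t)‖ ≤ ∫ t in a..b, M * |s - t| := by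
    refine le_trans (intervalIntegral.norm_integral_le_integral_norm hab.le) ?_
    refine intervalIntegral.integral_mono_on hab.le hint2 hint3 ?_
    intro t ht
    exact key t ht
  have habs : Continuous (fun t : ℝ => |s - t|) :=
    (continuous_const.sub continuous_id).abs
  have i1 : (∫ t in a..s, |s - t|) = (s - a)^2 / 2 := by
    rw [intervalIntegral.integral_congr (g := fun t => s - t) ?_]
    · rw [intervalIntegral.integral_sub intervalIntegrable_const
        intervalIntegral.intervalIntegrable_id, intervalIntegral.integral_const,
        integral_id]
      simp only [smul_eq_mul]
      ring
    · intro t ht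
      rw [Set.uIcc_of_le hs.1] at ht
      exact abs_of_nonneg (sub_nonneg.mpr ht.2)
  have i2 : (∫ t in s..b, |s - t|) = (b - s)^2 / 2 := by
    rw [intervalIntegral.integral_congr (g := fun t => t - s) ?_]
    · rw [intervalIntegral.integral_sub intervalIntegral.intervalIntegrable_id
        intervalIntegrable_const, intervalIntegral.integral_const, integral_id]
      simp only [smul_eq_mul]
      ring
    · intro t ht
      rw [Set.uIcc_of_le hs.2] at ht
      show |s - t| = t - s
      rw [abs_sub_comm]
      exact abs_of_nonneg (sub_nonneg.mpr ht.1)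
  have hcalc : (∫ t in a..b, M * |s - t|) = M * (((s - a)^2 + (b - s)^2) / 2) := by
    rw [intervalIntegral.integral_const_mul]
    congr 1
    rw [← intervalIntegral.integral_add_adjacent_intervals
      (habs.intervalIntegrable a s) (habs.intervalIntegrable s b), i1, i2]
    ring
  have hfinal : ‖f s - (b - a)⁻¹ • (∫ t in a..b, f t)‖
      ≤ (b - a)⁻¹ * (M * (((s - a)^2 + (b - s)^2) / 2)) := by
    rw [hrw, norm_smul, Real.norm_eq_abs, abs_of_pos (inv_pos.mpr hba)]
    exact mul_le_mul_of_nonneg_left (hb1.trans_eq hcalc) (inv_nonneg.mpr hba.le)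
  refine hfinal.trans_eq ?_
  field_simp
  ring
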